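/- Let P be a regular n×n complex matrix polynomial of degree d, let ℓ ≥ 1 divide d, let ℒ(λ) be an (ε,n,η,n)-block Kronecker ℓ-ification of P built from a solution M(λ) of (Λ_η(λ^ℓ)^T ⊗ I_n) M(λ) (Λ_ε(λ^ℓ) ⊗ I_n) = P(λ), and let λ0 ∈ ℂ be a simple nonzero eigenvalue of P, i.e., λ0 ≠ 0 and λ0 is a root of det P(λ) of multiplicity exactly 1. Let x, y ∈ ℂ^n be nonzero with P(λ0) x = 0 and y* P(λ0) = 0, and set z = G(λ0; ε, η, M) x and w = [conj(λ0)^{εℓ} (Λ_η(conj(λ0)^ℓ) ⊗ I_n) ; −S_ε(conj(λ0)^ℓ) M(λ0)* (Λ_η(conj(λ0)^ℓ) ⊗ I_n)] y. Then z and w are nonzero, ℒ(λ0) z = 0, w* ℒ(λ0) = 0, and |w* ℒ′(λ0) z| = |λ0|^{d−ℓ} |y* P′(λ0) x|, where ℒ′ and P′ denote entrywise derivatives, (·)* the conjugate transpose, and conj(λ0) the complex conjugate of λ0. -/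

import Mathlib

/-!
Write `v = λ^ℓ`. The identities `L_k(v) Λ_k(v) = 0` and `L_k(v)ᵀ S_k(v) = v^k I − e₁ Λ_k(v)ᵀ`
(tensored with `I_n`) give `ℒ(λ) G(λ; ε, η, M) = [e₁ ⊗ P(λ); 0]`. At `λ₀` this makes
`z = G x` a right eigenvector of `ℒ`; the transposed identity, with `Mᵀ` in place of `M`, makes
`w` a left one. Both are nonzero because the last block of the top part of `G(λ₀) x` is
`λ₀^{ηℓ} x` (and likewise for `w`). Differentiating the identity over `ℂ[X]` gives
`ℒ′ G + ℒ G′ = [e₁ ⊗ P′; 0]`; multiplying by `w*` kills `ℒ(λ₀) G′(λ₀)`, and the first block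
of `w*` is `λ₀^{εℓ} λ₀^{ηℓ} y*`, so `w* ℒ′(λ₀) z = λ₀^{d−ℓ} y* P′(λ₀) x`.
-/

open Matrix BigOperators

noncomputable section

/-- Evaluation at `x` of the matrix polynomial with coefficients `C 0, …, C N`. -/
def mpEval {α β : Type*} (N : ℕ) (C : ℕ → Matrix α β ℂ) (x : ℂ) : Matrix α β ℂ :=
  ∑ i ∈ Finset.range (N + 1), x ^ i • C i

/-- Entrywise derivative of the matrix polynomial, evaluated at `x`. -/
def mpDer {α β : Type*} (N : ℕ) (C : ℕ → Matrix α β ℂ) (x : ℂ) : Matrix α β ℂ :=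
  ∑ i ∈ Finset.range (N + 1), ((i : ℂ) * x ^ (i - 1)) • C i

/-- Spectral norm (operator 2-norm, i.e. largest singular value) of a complex matrix. -/
def sNorm {α β : Type*} [Fintype α] [Fintype β] [DecidableEq β] (A : Matrix α β ℂ) : ℝ :=
  ‖LinearMap.toContinuousLinearMap (Matrix.toEuclideanLin A)‖

/-- Euclidean norm of a complex vector. -/
def vNorm {α : Type*} [Fintype α] (v : α → ℂ) : ℝ :=
  Real.sqrt (∑ i, ‖v i‖ ^ 2)

/-- `Λ_k(x^ℓ) ⊗ I_n`, a `(k+1)n × n` matrix whose `i`-th (0-based) `n × n` block is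
`x^(ℓ(k−i)) I_n`. -/
def LamI (n k l : ℕ) (x : ℂ) : Matrix (Fin (k + 1) × Fin n) (Fin n) ℂ :=
  Matrix.of fun p s => if p.2 = s then x ^ (l * (k - (p.1 : ℕ))) else 0

/-- `L_k(x^ℓ) ⊗ I_n`, a `kn × (k+1)n` matrix. -/
def LkI (n k l : ℕ) (x : ℂ) : Matrix (Fin k × Fin n) (Fin (k + 1) × Fin n) ℂ :=
  Matrix.of fun p q =>
    if p.2 = q.2 then
      if (q.1 : ℕ) = (p.1 : ℕ) then -1
      else if (q.1 : ℕ) = (p.1 : ℕ) + 1 then x ^ l else 0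
    else 0

/-- The degree-`0` coefficient of `L_k(λ^ℓ) ⊗ I_n`. -/
def LkI0 (n k : ℕ) : Matrix (Fin k × Fin n) (Fin (k + 1) × Fin n) ℂ :=
  Matrix.of fun p q => if p.2 = q.2 ∧ (q.1 : ℕ) = (p.1 : ℕ) then -1 else 0

/-- The degree-`ℓ` coefficient of `L_k(λ^ℓ) ⊗ I_n`. -/
def LkI1 (n k : ℕ) : Matrix (Fin k × Fin n) (Fin (k + 1) × Fin n) ℂ :=
  Matrix.of fun p q => if p.2 = q.2 ∧ (q.1 : ℕ) = (p.1 : ℕ) + 1 then 1 else 0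

/-- `R_k(x^ℓ)`: `n × n` blocks `x^(ℓ(i−j)) I_n` for `j ≤ i` (0-based), `0` otherwise. -/
def Rmat (n k l : ℕ) (x : ℂ) : Matrix (Fin k × Fin n) (Fin (k + 1) × Fin n) ℂ :=
  Matrix.of fun p q =>
    if p.2 = q.2 ∧ (q.1 : ℕ) ≤ (p.1 : ℕ) then x ^ (l * ((p.1 : ℕ) - (q.1 : ℕ))) else 0

/-- `S_k(x^ℓ)`: `n × n` blocks `x^(ℓ(k+i−j)) I_n` for `i < j` (0-based), `0` otherwise. -/
def Smat (n k l : ℕ) (x : ℂ) : Matrix (Fin k × Fin n) (Fin (k + 1) × Fin n) ℂ :=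
  Matrix.of fun p q =>
    if p.2 = q.2 ∧ (p.1 : ℕ) < (q.1 : ℕ) then x ^ (l * (k + (p.1 : ℕ) - (q.1 : ℕ))) else 0

/-- The block column `H(x; p, q, N) = [Λ_p(x^ℓ) ⊗ I_n ; R_q(x^ℓ) N(x) (Λ_p(x^ℓ) ⊗ I_n)]`. -/
def Hmat (n l p q : ℕ) (N : ℂ → Matrix (Fin (q + 1) × Fin n) (Fin (p + 1) × Fin n) ℂ)
    (x : ℂ) : Matrix ((Fin (p + 1) × Fin n) ⊕ (Fin q × Fin n)) (Fin n) ℂ :=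
  Matrix.of fun r c =>
    Sum.elim (fun a => LamI n p l x a c)
      (fun a => (Rmat n q l x * (N x * LamI n p l x)) a c) r

/-- The block column `G(x; p, q, N) = [x^(qℓ)(Λ_p(x^ℓ) ⊗ I_n) ; −S_q(x^ℓ) N(x) (Λ_p(x^ℓ) ⊗ I_n)]`. -/
def Gmat (n l p q : ℕ) (N : ℂ → Matrix (Fin (q + 1) × Fin n) (Fin (p + 1) × Fin n) ℂ)
    (x : ℂ) : Matrix ((Fin (p + 1) × Fin n) ⊕ (Fin q × Fin n)) (Fin n) ℂ :=
  Matrix.of fun r c =>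
    Sum.elim (fun a => x ^ (q * l) * LamI n p l x a c)
      (fun a => (-(Smat n q l x * (N x * LamI n p l x))) a c) r

/-- Coefficients of the `(ε,n,η,n)`-block Kronecker `ℓ`-ification
`ℒ(λ) = [[M(λ), L_η(λ^ℓ)ᵀ ⊗ I_n], [L_ε(λ^ℓ) ⊗ I_n, 0]]`. -/
def LcalCoef (n l ε η : ℕ)
    (M : ℕ → Matrix (Fin (η + 1) × Fin n) (Fin (ε + 1) × Fin n) ℂ) (i : ℕ) :
    Matrix ((Fin (η + 1) × Fin n) ⊕ (Fin ε × Fin n))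
      ((Fin (ε + 1) × Fin n) ⊕ (Fin η × Fin n)) ℂ :=
  Matrix.fromBlocks (M i)
    (if i = 0 then (LkI0 n η)ᵀ else if i = l then (LkI1 n η)ᵀ else 0)
    (if i = 0 then LkI0 n ε else if i = l then LkI1 n ε else 0) 0

/-- `det P(λ)` as a scalar polynomial, where `P(λ) = Σ_{i=0}^d A_i λ^i`. -/
def detPoly (n d : ℕ) (A : ℕ → Matrix (Fin n) (Fin n) ℂ) : Polynomial ℂ :=
  (∑ i ∈ Finset.range (d + 1), (Polynomial.X : Polynomial ℂ) ^ i • (A i).map Polynomial.C).det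

/-- The horizontal concatenation `[A_0 A_1 ⋯ A_d]`. -/
def rowConcat (n d : ℕ) (A : ℕ → Matrix (Fin n) (Fin n) ℂ) :
    Matrix (Fin n) (Fin (d + 1) × Fin n) ℂ :=
  Matrix.of fun r q => A (q.1 : ℕ) r q.2

/-- Coefficientwise eigenvalue condition number of `Q(λ) = Σ_{i=0}^N C_i λ^i` at the
eigentriple `(v, x0, u)`. -/
def coeffCond {α β : Type*} [Fintype α] [Fintype β] [DecidableEq β] (N : ℕ)
    (C : ℕ → Matrix α β ℂ) (x0 : ℂ) (u : β → ℂ) (v : α → ℂ) : ℝ :=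
  (∑ i ∈ Finset.range (N + 1), ‖x0‖ ^ i * sNorm (C i)) * vNorm u * vNorm v /
    (‖x0‖ * ‖dotProduct (star v) ((mpDer N C x0).mulVec u)‖)

/-- Normwise eigenvalue condition number of `P(λ) = Σ_{i=0}^d A_i λ^i` at `(y, x0, x)`. -/
def normCond (n d : ℕ) (A : ℕ → Matrix (Fin n) (Fin n) ℂ) (x0 : ℂ)
    (x y : Fin n → ℂ) : ℝ :=
  sNorm (rowConcat n d A) * (∑ i ∈ Finset.range (d + 1), ‖x0‖ ^ i) *
      vNorm x * vNorm y /
    (‖x0‖ * ‖dotProduct (star y) ((mpDer d A x0).mulVec x)‖)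

/-- Each `n × n` block of each coefficient `M_t`, `t = 0, …, ℓ`, is `0`, `I_n`,
or one of the coefficients `A_s` of `P`.  -/
def IsCompanionM (n d l ε η : ℕ) (A : ℕ → Matrix (Fin n) (Fin n) ℂ)
    (M : ℕ → Matrix (Fin (η + 1) × Fin n) (Fin (ε + 1) × Fin n) ℂ) : Prop :=
  ∀ t ≤ l, ∀ (i : Fin (η + 1)) (j : Fin (ε + 1)),
    (Matrix.of fun r s => M t (i, r) (j, s)) = 0 ∨
    (Matrix.of fun r s => M t (i, r) (j, s)) = (1 : Matrix (Fin n) (Fin n) ℂ) ∨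
    ∃ s ≤ d, (Matrix.of fun r s' => M t (i, r) (j, s')) = A s

theorem Fin.sum_univ_ite_eq_val {M : Type*} [AddCommMonoid M] {m : ℕ} (a : ℕ) (f : Fin m → M) :
    ∑ i : Fin m, (if a = (i : ℕ) then f i else 0) = if h : a < m then f ⟨a, h⟩ else 0 := by
  split_ifs with h
  · rw [Finset.sum_eq_single ⟨a, h⟩ (fun i _ hi => if_neg fun hai => hi (Fin.ext hai.symm))
      (fun h' => absurd (Finset.mem_univ _) h'), if_pos rfl]
  · exact Finset.sum_eq_zero fun i _ => if_neg fun hai : a = i => h (hai ▸ i.isLt)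

theorem Fin.sum_univ_ite_eq_val_add_one {M : Type*} [AddCommMonoid M] {m : ℕ} (a : ℕ)
    (f : Fin m → M) :
    ∑ i : Fin m, (if a = (i : ℕ) + 1 then f i else 0) =
      if h : 0 < a ∧ a - 1 < m then f ⟨a - 1, h.2⟩ else 0 := by
  split_ifs with h
  · rw [Finset.sum_eq_single ⟨a - 1, h.2⟩
      (fun i _ hi => if_neg fun hai => hi (Fin.ext (by simp; omega)))
      (fun h' => absurd (Finset.mem_univ _) h'), if_pos (by simp; omega)]
  · exact Finset.sum_eq_zero fun i _ => if_neg fun hai : a = i + 1 => h ⟨by omega, by omega⟩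

section BlockMatrices

/- `blockLam n k v`, `blockL n k v`, `blockS n k v` are `Λ_k(v) ⊗ I_n`, `L_k(v) ⊗ I_n`,
`S_k(v) ⊗ I_n` over any commutative ring, so that besides `v = x ^ ℓ` (where they are `LamI`,
`LkI0 + x ^ ℓ • LkI1` and `Smat`) they can be taken at `v = X ^ ℓ` in `ℂ[X]`;
`blockE` is `e₁ ⊗ I_n`. -/

variable {R : Type*} [CommRing R] (n : ℕ)

def blockLam (k : ℕ) (v : R) : Matrix (Fin (k + 1) × Fin n) (Fin n) R :=
  Matrix.of fun p s => if p.2 = s then v ^ (k - (p.1 : ℕ)) else 0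

def blockL0 (k : ℕ) : Matrix (Fin k × Fin n) (Fin (k + 1) × Fin n) R :=
  Matrix.of fun p q => if p.2 = q.2 ∧ (q.1 : ℕ) = (p.1 : ℕ) then -1 else 0

def blockL1 (k : ℕ) : Matrix (Fin k × Fin n) (Fin (k + 1) × Fin n) R :=
  Matrix.of fun p q => if p.2 = q.2 ∧ (q.1 : ℕ) = (p.1 : ℕ) + 1 then 1 else 0

def blockL (k : ℕ) (v : R) : Matrix (Fin k × Fin n) (Fin (k + 1) × Fin n) R :=
  blockL0 n k + v • blockL1 n k

def blockS (k : ℕ) (v : R) : Matrix (Fin k × Fin n) (Fin (k + 1) × Fin n) R :=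
  Matrix.of fun p q =>
    if p.2 = q.2 ∧ (p.1 : ℕ) < (q.1 : ℕ) then v ^ (k + (p.1 : ℕ) - (q.1 : ℕ)) else 0

variable (R) in
def blockE (k : ℕ) : Matrix (Fin (k + 1) × Fin n) (Fin n) R :=
  Matrix.of fun p s => if (p.1 : ℕ) = 0 ∧ p.2 = s then 1 else 0

variable {n}

theorem blockL_mul_apply {α : Type*} {k : ℕ} (v : R) (N : Matrix (Fin (k + 1) × Fin n) α R)
    (i : Fin k) (r : Fin n) (c : α) :
    (blockL n k v * N) (i, r) c = -N (i.castSucc, r) c + v * N (i.succ, r) c := by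
  have hcast : ∀ x : Fin (k + 1), (x : ℕ) = i ↔ x = i.castSucc := fun x => by simp [Fin.ext_iff]
  have hsucc : ∀ x : Fin (k + 1), (x : ℕ) = i + 1 ↔ x = i.succ := fun x => by simp [Fin.ext_iff]
  rw [Matrix.mul_apply, Fintype.sum_prod_type]
  simp only [blockL, blockL0, blockL1, Matrix.add_apply, Matrix.smul_apply, of_apply, smul_eq_mul,
    ite_and, hcast, hsucc, add_mul, ite_mul, mul_ite, neg_one_mul, mul_one, zero_mul, mul_zero,
    Finset.sum_add_distrib, Finset.sum_ite_eq, Finset.sum_ite_eq', Finset.mem_univ, if_true]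

theorem blockL_transpose_mul_apply {α : Type*} {k : ℕ} (v : R) (N : Matrix (Fin k × Fin n) α R)
    (j : Fin (k + 1)) (t : Fin n) (c : α) :
    ((blockL n k v)ᵀ * N) (j, t) c =
      (if h : (j : ℕ) < k then -N (⟨j, h⟩, t) c else 0) +
        (if h : 0 < (j : ℕ) then v * N (⟨j - 1, by omega⟩, t) c else 0) := by
  rw [Matrix.mul_apply, Fintype.sum_prod_type]
  simp only [blockL, blockL0, blockL1, transpose_apply, Matrix.add_apply, Matrix.smul_apply,
    of_apply, smul_eq_mul, ite_and, add_mul, ite_mul, mul_ite, neg_one_mul, mul_one, zero_mul,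
    mul_zero, Finset.sum_add_distrib, Finset.sum_ite_eq', Finset.mem_univ, if_true,
    Fin.sum_univ_ite_eq_val, Fin.sum_univ_ite_eq_val_add_one]
  congr 1
  by_cases hj : 0 < (j : ℕ)
  · rw [dif_pos ⟨hj, by omega⟩, dif_pos hj]
  · rw [dif_neg fun h => hj h.1, dif_neg hj]

theorem blockE_mul_apply {α : Type*} {k : ℕ} (N : Matrix (Fin n) α R) (j : Fin (k + 1))
    (t : Fin n) (c : α) : (blockE R n k * N) (j, t) c = if (j : ℕ) = 0 then N t c else 0 := by
  rw [Matrix.mul_apply]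
  simp [blockE, ite_and]

theorem blockL_mul_blockLam (k : ℕ) (v : R) : blockL n k v * blockLam n k v = 0 := by
  ext ⟨i, r⟩ s
  rw [blockL_mul_apply]
  have hk : k - (i : ℕ) = k - ((i : ℕ) + 1) + 1 := by omega
  simp only [blockLam, of_apply, Fin.val_castSucc, Fin.val_succ, hk, pow_succ']
  split_ifs <;> simp

theorem blockL_transpose_mul_blockS (k : ℕ) (v : R) :
    (blockL n k v)ᵀ * blockS n k v = v ^ k • 1 - blockE R n k * (blockLam n k v)ᵀ := by
  ext ⟨j, t⟩ ⟨j', t'⟩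
  rw [blockL_transpose_mul_apply, Matrix.sub_apply, blockE_mul_apply]
  by_cases htt : t = t'
  · subst htt
    simp only [blockS, blockLam, of_apply, transpose_apply, Matrix.smul_apply, one_apply, true_and,
      and_true, Prod.mk.injEq, Fin.ext_iff, smul_eq_mul, mul_ite, mul_one, mul_zero, if_true]
    have hj := j.isLt
    have hj' := j'.isLt
    rcases Nat.eq_zero_or_pos (j : ℕ) with h0 | hpos
    · rcases Nat.eq_zero_or_pos (j' : ℕ) with h0' | hpos'
      · simp [h0, h0']
      · simp [h0, hpos', hpos'.ne, show 0 < k by omega]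
    · have hshift : v * v ^ (k + ((j : ℕ) - 1) - j') = v ^ (k + j - j') := by
        rw [← pow_succ']; congr 1; omega
      rw [hshift]
      rcases lt_trichotomy (j : ℕ) j' with hlt | heq | hgt
      · simp [hpos, hpos.ne', hlt, hlt.ne, show (j : ℕ) < k by omega,
          show (j : ℕ) - 1 < j' by omega]
      · rw [heq] at hpos
        simp [heq, hpos, hpos.ne']
      · simp [hpos, hpos.ne', hgt.ne', not_lt.mpr hgt.le, show ¬ (j : ℕ) - 1 < j' by omega]
  · simp [blockS, blockLam, one_apply, htt, Ne.symm htt]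

theorem blockLam_transpose_mul_blockE (k : ℕ) (v : R) :
    (blockLam n k v)ᵀ * blockE R n k = v ^ k • 1 := by
  ext s s'
  rw [Matrix.mul_apply, Fintype.sum_prod_type]
  simp [blockLam, blockE, one_apply, ite_and, eq_comm]

/- `ℒ(λ)` with `(1,1)` block `B`, and `G(λ; p, q, N)` with `N(λ) = B`, both at `v = λ ^ ℓ`. -/

variable (n) in
def blockKronecker (p q : ℕ) (B : Matrix (Fin (q + 1) × Fin n) (Fin (p + 1) × Fin n) R) (v : R) :
    Matrix ((Fin (q + 1) × Fin n) ⊕ (Fin p × Fin n)) ((Fin (p + 1) × Fin n) ⊕ (Fin q × Fin n)) R :=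
  fromBlocks B (blockL n q v)ᵀ (blockL n p v) 0

variable (n) in
def blockG (p q : ℕ) (B : Matrix (Fin (q + 1) × Fin n) (Fin (p + 1) × Fin n) R) (v : R) :
    Matrix ((Fin (p + 1) × Fin n) ⊕ (Fin q × Fin n)) (Fin n) R :=
  fromRows (v ^ q • blockLam n p v) (-(blockS n q v * (B * blockLam n p v)))

section
variable (p q : ℕ) (B : Matrix (Fin (q + 1) × Fin n) (Fin (p + 1) × Fin n) R) (v : R)

theorem blockKronecker_mul_blockG :
    blockKronecker n p q B v * blockG n p q B v =
      fromRows (blockE R n q * ((blockLam n q v)ᵀ * B * blockLam n p v)) 0 := by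
  rw [blockKronecker, blockG, fromBlocks_mul_fromRows, Matrix.mul_smul, Matrix.mul_smul,
    blockL_mul_blockLam, smul_zero, Matrix.zero_mul, add_zero, Matrix.mul_neg,
    ← Matrix.mul_assoc (blockL n q v)ᵀ, blockL_transpose_mul_blockS, Matrix.sub_mul,
    Matrix.smul_mul, Matrix.one_mul, Matrix.mul_assoc, Matrix.mul_assoc, neg_sub, add_sub_cancel]

theorem blockKronecker_transpose : (blockKronecker n p q B v)ᵀ = blockKronecker n q p Bᵀ v := by
  rw [blockKronecker, blockKronecker, fromBlocks_transpose, transpose_transpose, transpose_zero]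

theorem blockKronecker_mulVec_blockG_mulVec (x : Fin n → R)
    (hx : ((blockLam n q v)ᵀ * B * blockLam n p v) *ᵥ x = 0) :
    blockKronecker n p q B v *ᵥ (blockG n p q B v *ᵥ x) = 0 := by
  rw [mulVec_mulVec, blockKronecker_mul_blockG, fromRows_mulVec, ← mulVec_mulVec, hx, mulVec_zero,
    zero_mulVec, Sum.elim_zero_zero]

theorem blockG_transpose_mul_fromRows_blockE (Q : Matrix (Fin n) (Fin n) R) :
    (blockG n p q B v)ᵀ * fromRows (blockE R n p * Q) (0 : Matrix (Fin q × Fin n) (Fin n) R) =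
      (v ^ q * v ^ p) • Q := by
  rw [blockG, transpose_fromRows, fromCols_mul_fromRows, Matrix.mul_zero, add_zero,
    transpose_smul, Matrix.smul_mul, ← Matrix.mul_assoc, blockLam_transpose_mul_blockE,
    Matrix.smul_mul, Matrix.one_mul, smul_smul]

theorem blockG_mulVec_inl_last (x : Fin n → R) (s : Fin n) :
    (blockG n p q B v *ᵥ x) (Sum.inl (Fin.last p, s)) = v ^ q * x s := by
  simp [blockG, blockLam, mulVec, dotProduct]

theorem blockG_mulVec_ne_zero [IsDomain R] {v : R} (hv : v ≠ 0) {x : Fin n → R} (hx : x ≠ 0) :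
    blockG n p q B v *ᵥ x ≠ 0 := by
  obtain ⟨s, hs⟩ := Function.ne_iff.mp hx
  intro h
  have hlast := blockG_mulVec_inl_last p q B v x s
  rw [h] at hlast
  exact mul_ne_zero (pow_ne_zero q hv) hs hlast.symm

end

variable {S : Type*} [CommRing S] (f : R →+* S)

theorem blockLam_map (k : ℕ) (v : R) : (blockLam n k v).map f = blockLam n k (f v) := by
  ext; simp [blockLam, apply_ite f]

theorem blockL0_map (k : ℕ) : (blockL0 n k).map f = blockL0 n k := by
  ext; simp [blockL0, apply_ite f]

theorem blockL1_map (k : ℕ) : (blockL1 n k).map f = blockL1 n k := by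
  ext; simp [blockL1, apply_ite f]

theorem blockL_map (k : ℕ) (v : R) : (blockL n k v).map f = blockL n k (f v) := by
  rw [blockL, Matrix.map_add _ (map_add f), Matrix.map_smulₛₗ f f _ fun a => map_mul f _ a,
    blockL0_map, blockL1_map]
  rfl

theorem blockS_map (k : ℕ) (v : R) : (blockS n k v).map f = blockS n k (f v) := by
  ext; simp [blockS, apply_ite f]

theorem blockE_map (k : ℕ) : (blockE R n k).map f = blockE S n k := by
  ext; simp [blockE, apply_ite f]

theorem blockKronecker_map (p q : ℕ) (B : Matrix (Fin (q + 1) × Fin n) (Fin (p + 1) × Fin n) R)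
    (v : R) : (blockKronecker n p q B v).map f = blockKronecker n p q (B.map f) (f v) := by
  simp [blockKronecker, fromBlocks_map, transpose_map, blockL_map]

theorem blockG_map (p q : ℕ) (B : Matrix (Fin (q + 1) × Fin n) (Fin (p + 1) × Fin n) R)
    (v : R) : (blockG n p q B v).map f = blockG n p q (B.map f) (f v) := by
  rw [blockG, blockG, fromRows_map, Matrix.map_smulₛₗ f f _ fun a => map_mul f _ a,
    Matrix.map_neg _ (map_neg f), Matrix.map_mul, Matrix.map_mul, blockLam_map, blockS_map,
    map_pow]

end BlockMatrices

section PolynomialMatrices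

open Polynomial

variable {R : Type*} [CommRing R] {ι κ μ : Type*}

theorem Matrix.map_derivative_mul [Fintype κ] (A : Matrix ι κ R[X]) (B : Matrix κ μ R[X]) :
    (A * B).map derivative = A.map derivative * B + A * B.map derivative := by
  ext i j
  simp [Matrix.mul_apply, derivative_mul, Finset.sum_add_distrib]

theorem Matrix.eq_of_forall_map_eval [IsDomain R] [Infinite R] {A B : Matrix ι κ R[X]}
    (h : ∀ t, A.map (evalRingHom t) = B.map (evalRingHom t)) : A = B :=
  Matrix.ext fun i j => Polynomial.funext fun t => congrFun (congrFun (h t) i) j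

theorem dotProduct_map_derivative_mul_mulVec [Fintype ι] [Fintype κ] [Fintype μ]
    {A : Matrix ι κ R[X]} {B : Matrix κ μ R[X]} {F : Matrix ι μ R[X]} (hAB : A * B = F) (t : R)
    {u : ι → R} (hu : u ᵥ* A.map (evalRingHom t) = 0) (x : μ → R) :
    u ⬝ᵥ (((A.map derivative).map (evalRingHom t) * B.map (evalRingHom t)) *ᵥ x) =
      u ⬝ᵥ ((F.map derivative).map (evalRingHom t) *ᵥ x) := by
  rw [← hAB, Matrix.map_derivative_mul, Matrix.map_add _ (map_add _), Matrix.map_mul,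
    Matrix.map_mul, add_mulVec, dotProduct_add, ← mulVec_mulVec _ (A.map (evalRingHom t)),
    dotProduct_mulVec u (A.map (evalRingHom t)), hu, zero_dotProduct, add_zero]

def polyMat (N : ℕ) (C : ℕ → Matrix ι κ ℂ) : Matrix ι κ ℂ[X] :=
  ∑ i ∈ Finset.range (N + 1), (X : ℂ[X]) ^ i • (C i).map Polynomial.C

theorem polyMat_map_eval (N : ℕ) (C : ℕ → Matrix ι κ ℂ) (t : ℂ) :
    (polyMat N C).map (evalRingHom t) = mpEval N C t := by
  ext i j
  simp only [polyMat, mpEval, coe_evalRingHom, map_apply, Matrix.sum_apply, Matrix.smul_apply,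
    smul_eq_mul, X_pow_mul_C, eval_finsetSum, eval_mul, eval_C, eval_pow, eval_X]
  exact Finset.sum_congr rfl fun _ _ => mul_comm _ _

theorem polyMat_map_derivative_map_eval (N : ℕ) (C : ℕ → Matrix ι κ ℂ) (t : ℂ) :
    ((polyMat N C).map derivative).map (evalRingHom t) = mpDer N C t := by
  ext i j
  simp only [polyMat, mpDer, coe_evalRingHom, map_apply, Matrix.sum_apply, Matrix.smul_apply,
    smul_eq_mul, X_pow_mul_C, map_sum, derivative_mul, derivative_C, zero_mul, derivative_X_pow,
    map_natCast, zero_add, eval_finsetSum, eval_mul, eval_C, eval_natCast, eval_pow, eval_X]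
  exact Finset.sum_congr rfl fun _ _ => by ring

theorem polyMat_fromBlocks {ι' κ' : Type*} (N : ℕ) (A : ℕ → Matrix ι κ ℂ)
    (B : ℕ → Matrix ι κ' ℂ) (C : ℕ → Matrix ι' κ ℂ) (D : ℕ → Matrix ι' κ' ℂ) :
    polyMat N (fun i => fromBlocks (A i) (B i) (C i) (D i)) =
      fromBlocks (polyMat N A) (polyMat N B) (polyMat N C) (polyMat N D) := by
  ext (a | a) (b | b) <;> simp [polyMat, Matrix.sum_apply]

theorem polyMat_ite_zero_ite_eq {l : ℕ} (hl : l ≠ 0) (C₀ C₁ : Matrix ι κ ℂ) :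
    polyMat l (fun i => if i = 0 then C₀ else if i = l then C₁ else 0) =
      C₀.map Polynomial.C + (X : ℂ[X]) ^ l • C₁.map Polynomial.C := by
  rw [polyMat, Finset.sum_eq_add 0 l (Ne.symm hl)]
  · simp [hl]
  · intro i _ hi
    simp [hi.1, hi.2]
  · simp
  · simp

end PolynomialMatrices

section Lification

open Polynomial

theorem LamI_eq_blockLam (n k l : ℕ) (x : ℂ) : LamI n k l x = blockLam n k (x ^ l) := by
  ext; simp [LamI, blockLam, pow_mul]

theorem Smat_eq_blockS (n k l : ℕ) (x : ℂ) : Smat n k l x = blockS n k (x ^ l) := by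
  ext; simp [Smat, blockS, pow_mul]

theorem Gmat_eq_blockG (n l p q : ℕ)
    (N : ℂ → Matrix (Fin (q + 1) × Fin n) (Fin (p + 1) × Fin n) ℂ) (x : ℂ) :
    Gmat n l p q N x = blockG n p q (N x) (x ^ l) := by
  ext (a | a) c <;>
    simp [Gmat, blockG, LamI_eq_blockLam, Smat_eq_blockS, ← pow_mul, mul_comm]

theorem star_Gmat_conj_mulVec (n l p q : ℕ)
    (B : Matrix (Fin (p + 1) × Fin n) (Fin (q + 1) × Fin n) ℂ) (x : ℂ) (y : Fin n → ℂ) :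
    star (Gmat n l p q (fun _ => Bᴴ) (starRingEnd ℂ x) *ᵥ y) =
      blockG n p q Bᵀ (x ^ l) *ᵥ star y := by
  rw [star_mulVec, ← transpose_transpose (Gmat _ _ _ _ _ _)ᴴ, vecMul_transpose,
    conjTranspose_transpose, Gmat_eq_blockG]
  have hconj : Bᴴ.map (starRingEnd ℂ) = Bᵀ := by ext; simp
  have hG : (blockG n p q Bᴴ (starRingEnd ℂ x ^ l)).map (starRingEnd ℂ) =
      blockG n p q Bᵀ (x ^ l) := by
    rw [blockG_map, hconj, map_pow, Complex.conj_conj]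
  exact congrArg (· *ᵥ star y) hG

variable {n l ε η : ℕ} {M : ℕ → Matrix (Fin (η + 1) × Fin n) (Fin (ε + 1) × Fin n) ℂ}

theorem polyMat_LcalCoef (hl : l ≠ 0) :
    polyMat l (LcalCoef n l ε η M) = blockKronecker n ε η (polyMat l M) (X ^ l : ℂ[X]) := by
  have hL : ∀ k, (blockL n k (X ^ l : ℂ[X])) =
      (LkI0 n k).map Polynomial.C + (X : ℂ[X]) ^ l • (LkI1 n k).map Polynomial.C :=
    fun k => by rw [blockL, ← blockL0_map Polynomial.C, ← blockL1_map Polynomial.C]; rfl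
  unfold LcalCoef
  rw [polyMat_fromBlocks, polyMat_ite_zero_ite_eq hl, polyMat_ite_zero_ite_eq hl, blockKronecker,
    hL, hL, transpose_add, transpose_smul, transpose_map, transpose_map]
  congr
  simp [polyMat]

theorem mpEval_LcalCoef (hl : l ≠ 0) (t : ℂ) :
    mpEval l (LcalCoef n l ε η M) t = blockKronecker n ε η (mpEval l M t) (t ^ l) := by
  rw [← polyMat_map_eval, polyMat_LcalCoef hl, blockKronecker_map, polyMat_map_eval, map_pow,
    coe_evalRingHom, eval_X]

theorem blockLam_transpose_mul_polyMat_mul_blockLam {d : ℕ} {A : ℕ → Matrix (Fin n) (Fin n) ℂ}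
    (hM : ∀ x : ℂ, (LamI n η l x)ᵀ * mpEval l M x * LamI n ε l x = mpEval d A x) :
    (blockLam n η (X ^ l : ℂ[X]))ᵀ * polyMat l M * blockLam n ε (X ^ l : ℂ[X]) = polyMat d A :=
  Matrix.eq_of_forall_map_eval fun t => by
    rw [Matrix.map_mul, Matrix.map_mul, transpose_map, blockLam_map, blockLam_map,
      polyMat_map_eval, polyMat_map_eval, map_pow, coe_evalRingHom, eval_X, ← LamI_eq_blockLam,
      ← LamI_eq_blockLam, hM]

theorem blockE_map_derivative (n k : ℕ) : (blockE ℂ[X] n k).map derivative = 0 := by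
  ext; simp [blockE, apply_ite derivative]

theorem dotProduct_mpDer_LcalCoef_mulVec_Gmat (hl : l ≠ 0) {d : ℕ}
    {A : ℕ → Matrix (Fin n) (Fin n) ℂ}
    (hM : ∀ x : ℂ, (LamI n η l x)ᵀ * mpEval l M x * LamI n ε l x = mpEval d A x) (t : ℂ)
    {u : (Fin (η + 1) × Fin n) ⊕ (Fin ε × Fin n) → ℂ}
    (hu : u ᵥ* mpEval l (LcalCoef n l ε η M) t = 0) (x : Fin n → ℂ) :
    u ⬝ᵥ (mpDer l (LcalCoef n l ε η M) t *ᵥ (Gmat n l ε η (mpEval l M) t *ᵥ x)) =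
      u ⬝ᵥ (fromRows (blockE ℂ n η * mpDer d A t) (0 : Matrix (Fin ε × Fin n) (Fin n) ℂ) *ᵥ x) := by
  have hLG : polyMat l (LcalCoef n l ε η M) * blockG n ε η (polyMat l M) (X ^ l : ℂ[X]) =
      fromRows (blockE ℂ[X] n η * polyMat d A) 0 := by
    rw [polyMat_LcalCoef hl, blockKronecker_mul_blockG,
      blockLam_transpose_mul_polyMat_mul_blockLam hM]
  have hder := dotProduct_map_derivative_mul_mulVec hLG t (by rwa [polyMat_map_eval]) x
  rwa [polyMat_map_derivative_map_eval, blockG_map, polyMat_map_eval, fromRows_map,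
    Matrix.map_derivative_mul, blockE_map_derivative, Matrix.zero_mul, zero_add,
    Matrix.map_zero _ derivative_zero, fromRows_map, Matrix.map_mul, blockE_map,
    polyMat_map_derivative_map_eval, Matrix.map_zero _ (map_zero _), map_pow, coe_evalRingHom,
    eval_X, ← Gmat_eq_blockG, ← mulVec_mulVec] at hder

end Lification

theorem stmt14_general (n d l ε η : ℕ) (hl : 1 ≤ l) (hd : d = l * (ε + η + 1))
    (A : ℕ → Matrix (Fin n) (Fin n) ℂ)
    (M : ℕ → Matrix (Fin (η + 1) × Fin n) (Fin (ε + 1) × Fin n) ℂ)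
    (hM : ∀ x : ℂ, (LamI n η l x)ᵀ * mpEval l M x * LamI n ε l x = mpEval d A x)
    (lam0 : ℂ) (hlam0 : lam0 ≠ 0)
    (x y : Fin n → ℂ) (hx : x ≠ 0) (hy : y ≠ 0)
    (hPx : (mpEval d A lam0).mulVec x = 0)
    (hPy : (mpEval d A lam0).vecMul (star y) = 0)
    (z : ((Fin (ε + 1) × Fin n) ⊕ (Fin η × Fin n)) → ℂ)
    (w : ((Fin (η + 1) × Fin n) ⊕ (Fin ε × Fin n)) → ℂ)
    (hz : z = (Gmat n l ε η (mpEval l M) lam0).mulVec x)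
    (hw : w = (Gmat n l η ε (fun _ => (mpEval l M lam0)ᴴ)
                (starRingEnd ℂ lam0)).mulVec y) :
    z ≠ 0 ∧ w ≠ 0 ∧
      (mpEval l (LcalCoef n l ε η M) lam0).mulVec z = 0 ∧
      (mpEval l (LcalCoef n l ε η M) lam0).vecMul (star w) = 0 ∧
      ‖dotProduct (star w) ((mpDer l (LcalCoef n l ε η M) lam0).mulVec z)‖ =
        ‖lam0‖ ^ (d - l) *
          ‖dotProduct (star y) ((mpDer d A lam0).mulVec x)‖ := by
  have hl0 : l ≠ 0 := Nat.one_le_iff_ne_zero.mp hl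
  have hv : lam0 ^ l ≠ 0 := pow_ne_zero l hlam0
  have hP : (blockLam n η (lam0 ^ l))ᵀ * mpEval l M lam0 * blockLam n ε (lam0 ^ l) =
      mpEval d A lam0 := by
    simpa only [LamI_eq_blockLam] using hM lam0
  have hL := mpEval_LcalCoef (ε := ε) (η := η) (M := M) hl0 lam0
  have hzG : z = blockG n ε η (mpEval l M lam0) (lam0 ^ l) *ᵥ x := by rw [hz, Gmat_eq_blockG]
  have hwG : star w = blockG n η ε (mpEval l M lam0)ᵀ (lam0 ^ l) *ᵥ star y := by
    rw [hw, star_Gmat_conj_mulVec]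
  have hw0 : star w ᵥ* mpEval l (LcalCoef n l ε η M) lam0 = 0 := by
    rw [← mulVec_transpose, hL, blockKronecker_transpose, hwG]
    refine blockKronecker_mulVec_blockG_mulVec _ _ _ _ _ ?_
    rw [← mulVec_transpose, ← hP] at hPy
    simpa only [transpose_mul, transpose_transpose, Matrix.mul_assoc] using hPy
  refine ⟨hzG ▸ blockG_mulVec_ne_zero _ _ _ hv hx, fun h => ?_, ?_, hw0, ?_⟩
  · refine blockG_mulVec_ne_zero η ε (mpEval l M lam0)ᵀ hv (star_ne_zero.mpr hy) ?_
    rw [← hwG, h, star_zero]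
  · rw [hL, hzG]
    exact blockKronecker_mulVec_blockG_mulVec _ _ _ _ _ (hP ▸ hPx)
  · rw [hz, dotProduct_mpDer_LcalCoef_mulVec_Gmat hl0 hM lam0 hw0, hwG, ← vecMul_transpose,
      ← dotProduct_mulVec, mulVec_mulVec, blockG_transpose_mul_fromRows_blockE, smul_mulVec,
      dotProduct_smul, smul_eq_mul, norm_mul, norm_mul, ← pow_mul, ← pow_mul, norm_pow, norm_pow,
      ← pow_add, show d - l = l * ε + l * η by rw [hd]; ring_nf; omega]

/-- For a simple nonzero eigenvalue `lam0` of `P` with right/left eigenvectors `x`, `y`,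
the vectors `z = G(lam0; ε, η, M) x` and
`w = [conj lam0 ^ (εℓ) (Λ_η(conj lam0 ^ ℓ) ⊗ I_n) ;
      −S_ε(conj lam0 ^ ℓ) M(lam0)* (Λ_η(conj lam0 ^ ℓ) ⊗ I_n)] y`
are right/left eigenvectors of `ℒ` with eigenvalue `lam0`, and
`|w* ℒ′(lam0) z| = |lam0|^{d−ℓ} |y* P′(lam0) x|`. -/
theorem stmt14 (n d l ε η : ℕ) (hn : 0 < n) (hl : 1 ≤ l) (hd : d = l * (ε + η + 1))
    (A : ℕ → Matrix (Fin n) (Fin n) ℂ) (hdeg : A d ≠ 0)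
    (hreg : detPoly n d A ≠ 0)
    (M : ℕ → Matrix (Fin (η + 1) × Fin n) (Fin (ε + 1) × Fin n) ℂ)
    (hM : ∀ x : ℂ, (LamI n η l x)ᵀ * mpEval l M x * LamI n ε l x = mpEval d A x)
    (lam0 : ℂ) (hlam0 : lam0 ≠ 0)
    (hsimple : (detPoly n d A).rootMultiplicity lam0 = 1)
    (x y : Fin n → ℂ) (hx : x ≠ 0) (hy : y ≠ 0)
    (hPx : (mpEval d A lam0).mulVec x = 0)
    (hPy : (mpEval d A lam0).vecMul (star y) = 0)
    (z : ((Fin (ε + 1) × Fin n) ⊕ (Fin η × Fin n)) → ℂ)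
    (w : ((Fin (η + 1) × Fin n) ⊕ (Fin ε × Fin n)) → ℂ)
    (hz : z = (Gmat n l ε η (mpEval l M) lam0).mulVec x)
    (hw : w = (Gmat n l η ε (fun _ => (mpEval l M lam0)ᴴ)
                (starRingEnd ℂ lam0)).mulVec y) :
    z ≠ 0 ∧ w ≠ 0 ∧
      (mpEval l (LcalCoef n l ε η M) lam0).mulVec z = 0 ∧
      (mpEval l (LcalCoef n l ε η M) lam0).vecMul (star w) = 0 ∧
      ‖dotProduct (star w) ((mpDer l (LcalCoef n l ε η M) lam0).mulVec z)‖ =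
        ‖lam0‖ ^ (d - l) *
          ‖dotProduct (star y) ((mpDer d A lam0).mulVec x)‖ :=
  stmt14_general n d l ε η hl hd A M hM lam0 hlam0 x y hx hy hPx hPy z w hz hw
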